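/- There exists a constant C > 0 such that for every n ≥ 1, every θ = (θ_1,…,θ_n) ∈ ℝⁿ and all a, b ∈ ℝⁿ, ‖(θa, θb)‖_{Z_2^n} ≤ C·(max_{1≤j≤n} |θ_j|)·‖(a,b)‖_{Z_2^n}, where θa and θb denote the coordinatewise products (θ_j a_j)_j and (θ_j b_j)_j. -/

import Mathlib

open scoped BigOperators

/-- The Euclidean norm on `ℝⁿ`. -/
noncomputable def l2 {n : ℕ} (b : Fin n → ℝ) : ℝ := Real.sqrt (∑ j, b j ^ 2)

/-- The Kalton–Peck map `F(b)_j = b_j log(|b_j|/‖b‖₂)`, with `F(b)_j = 0` when `b_j = 0`. -/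
noncomputable def KPF {n : ℕ} (b : Fin n → ℝ) : Fin n → ℝ :=
  fun j => if b j = 0 then 0 else b j * Real.log (|b j| / l2 b)

/-- The Kalton–Peck quasi-norm `‖(a,b)‖ = ‖b‖₂ + ‖a - F(b)‖₂` on `ℝⁿ × ℝⁿ`. -/
noncomputable def znorm {n : ℕ} (x : (Fin n → ℝ) × (Fin n → ℝ)) : ℝ :=
  l2 x.2 + l2 (x.1 - KPF x.2)

/-- Operator "norm" `sup_{x ≠ 0} N_W(T x) / N_V(x)` of a map `T` between spaces
equipped with (quasi-)norms `N_V`, `N_W`. -/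
noncomputable def ratioSup {V W : Type*} [Zero V] (NV : V → ℝ) (NW : W → ℝ) (T : V → W) : ℝ :=
  ⨆ x : {x : V // x ≠ 0}, NW (T x.1) / NV x.1

/-!
The Euclidean part and the action of `θ` on `a - F(b)` are bounded by `max_j |θ_j|` trivially;
the point is the commutator `θ F(b) - F(θ b)`. Its `j`-th coordinate is `θ_j b_j log(u / |θ_j|)`
with `u = ‖θ b‖₂ / ‖b‖₂ ≤ M := max_j |θ_j|`, and `t log(u / t)` is at most `u / e` in absolute value
when `t ≤ u`, and at most `t log(M / u)` when `u < t ≤ M`. Summing,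
`‖θ F(b) - F(θ b)‖₂² ≤ ‖b‖₂² ((u/e)² + (u log(M/u))²) ≤ 2 (M/e)² ‖b‖₂² ≤ M² ‖b‖₂²`.
-/

open Real

lemma l2_eq_norm {n : ℕ} (b : Fin n → ℝ) : l2 b = ‖WithLp.toLp 2 b‖ := by
  simp [l2, EuclideanSpace.norm_eq, sq_abs]

lemma l2_nonneg {n : ℕ} (b : Fin n → ℝ) : 0 ≤ l2 b := sqrt_nonneg _

lemma l2_sq {n : ℕ} (b : Fin n → ℝ) : l2 b ^ 2 = ∑ j, b j ^ 2 :=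
  sq_sqrt (Finset.sum_nonneg fun j _ => sq_nonneg (b j))

lemma l2_le_iff {n : ℕ} {b : Fin n → ℝ} {r : ℝ} (hr : 0 ≤ r) : l2 b ≤ r ↔ ∑ j, b j ^ 2 ≤ r ^ 2 :=
  sqrt_le_left hr

lemma abs_le_l2 {n : ℕ} (b : Fin n → ℝ) (j : Fin n) : |b j| ≤ l2 b := by
  simpa [l2_eq_norm] using PiLp.norm_apply_le (WithLp.toLp 2 b) j

lemma l2_add_le {n : ℕ} (x y : Fin n → ℝ) : l2 (x + y) ≤ l2 x + l2 y := by
  simpa only [l2_eq_norm, WithLp.toLp_add] using norm_add_le (WithLp.toLp 2 x) (WithLp.toLp 2 y)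

lemma l2_mul_le {n : ℕ} (θ b : Fin n → ℝ) {M : ℝ} (hM : 0 ≤ M) (hθ : ∀ j, |θ j| ≤ M) :
    l2 (θ * b) ≤ M * l2 b := by
  rw [l2_le_iff (mul_nonneg hM (l2_nonneg b)), mul_pow, l2_sq, Finset.mul_sum]
  refine Finset.sum_le_sum fun j _ => ?_
  rw [Pi.mul_apply, mul_pow, ← sq_abs (θ j)]
  gcongr
  exact hθ j

lemma mul_log_div_le {t u : ℝ} (ht : 0 ≤ t) (hu : 0 ≤ u) : t * log (u / t) ≤ u / exp 1 := by
  rcases ht.eq_or_lt with rfl | ht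
  · simp only [zero_mul]; positivity
  rcases hu.eq_or_lt with rfl | hu
  · simp
  have h : exp 1 * log (u / t) ≤ u / t := by
    simpa only [exp_log (div_pos hu ht)] using exp_one_mul_le_exp (x := log (u / t))
  rw [le_div_iff₀ (exp_pos 1)]
  calc t * log (u / t) * exp 1 = t * (exp 1 * log (u / t)) := by ring
    _ ≤ t * (u / t) := by gcongr
    _ = u := by field_simp

lemma sq_mul_log_div_le {t u M : ℝ} (ht : 0 ≤ t) (htM : t ≤ M) (hu : 0 ≤ u) :
    (t * log (u / t)) ^ 2 ≤ (u / exp 1) ^ 2 + (t * log (M / u)) ^ 2 := by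
  rcases ht.eq_or_lt with rfl | ht
  · simp only [zero_mul, zero_pow two_ne_zero, add_zero]; positivity
  rcases hu.eq_or_lt with rfl | hu
  · simp
  rcases le_total t u with htu | hut
  · have hlog : 0 ≤ t * log (u / t) := mul_nonneg ht.le (log_nonneg ((one_le_div ht).2 htu))
    have := pow_le_pow_left₀ hlog (mul_log_div_le ht.le hu.le) 2
    linarith [sq_nonneg (t * log (M / u))]
  · have hlog : 0 ≤ log (t / u) := log_nonneg ((one_le_div hu).2 hut)
    have hlogM : log (t / u) ≤ log (M / u) := by gcongr
    have hsq : (t * log (u / t)) ^ 2 = (t * log (t / u)) ^ 2 := by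
      rw [← inv_div t u, log_inv]; ring
    rw [hsq]
    linarith [pow_le_pow_left₀ (mul_nonneg ht.le hlog) (mul_le_mul_of_nonneg_left hlogM ht.le) 2,
      sq_nonneg (u / exp 1)]

lemma sq_div_exp_one_add_sq_mul_log_le {u M : ℝ} (hu : 0 ≤ u) (huM : u ≤ M) :
    (u / exp 1) ^ 2 + (u * log (M / u)) ^ 2 ≤ M ^ 2 := by
  have hlog : 0 ≤ u * log (M / u) := by
    rcases hu.eq_or_lt with rfl | hu
    · simp
    exact mul_nonneg hu.le (log_nonneg ((one_le_div hu).2 huM))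
  have he : 2 ≤ exp 1 ^ 2 := by nlinarith [add_one_le_exp 1]
  calc (u / exp 1) ^ 2 + (u * log (M / u)) ^ 2 ≤ (M / exp 1) ^ 2 + (M / exp 1) ^ 2 := by
        gcongr
        exact mul_log_div_le hu (hu.trans huM)
    _ = 2 * M ^ 2 / exp 1 ^ 2 := by ring
    _ ≤ M ^ 2 := by
        rw [div_le_iff₀ (by positivity)]
        nlinarith [sq_nonneg M]

lemma KPF_commutator_apply {n : ℕ} (θ b : Fin n → ℝ) (j : Fin n) :
    (θ * KPF b - KPF (θ * b)) j = b j * (θ j * log (l2 (θ * b) / l2 b / |θ j|)) := by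
  by_cases hb : b j = 0
  · simp [KPF, hb]
  by_cases hθ : θ j = 0
  · simp [KPF, hθ]
  have hθb : θ j * b j ≠ 0 := mul_ne_zero hθ hb
  have hB : 0 < l2 b := (abs_pos.2 hb).trans_le (abs_le_l2 b j)
  have hT : 0 < l2 (θ * b) := (abs_pos.2 hθb).trans_le (abs_le_l2 (θ * b) j)
  have hlog : log (|b j| / l2 b) - log (|θ j * b j| / l2 (θ * b)) =
      log (l2 (θ * b) / l2 b / |θ j|) := by
    rw [← log_div (by positivity) (by positivity), abs_mul]
    congr 1
    field_simp
  simp only [KPF, Pi.sub_apply, Pi.mul_apply, if_neg hb, if_neg hθb, ← hlog]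
  ring

theorem l2_commutator_KPF_le {n : ℕ} (θ b : Fin n → ℝ) {M : ℝ} (hM : 0 ≤ M)
    (hθ : ∀ j, |θ j| ≤ M) : l2 (θ * KPF b - KPF (θ * b)) ≤ M * l2 b := by
  have hTB : l2 (θ * b) ≤ M * l2 b := l2_mul_le θ b hM hθ
  set u := l2 (θ * b) / l2 b
  have hu : 0 ≤ u := div_nonneg (l2_nonneg _) (l2_nonneg _)
  have huM : u ≤ M := div_le_of_le_mul₀ (l2_nonneg _) hM hTB
  have hT : l2 (θ * b) = u * l2 b := by
    rcases (l2_nonneg b).eq_or_lt with hB | hB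
    · rw [← hB, mul_zero] at hTB ⊢
      exact hTB.antisymm (l2_nonneg _)
    · exact (div_mul_cancel₀ _ hB.ne').symm
  have hcoord : ∀ j, (b j * (θ j * log (u / |θ j|))) ^ 2 ≤
      b j ^ 2 * (u / exp 1) ^ 2 + (θ * b) j ^ 2 * log (M / u) ^ 2 := fun j => by
    calc (b j * (θ j * log (u / |θ j|))) ^ 2 = b j ^ 2 * (|θ j| * log (u / |θ j|)) ^ 2 := by
          rw [mul_pow, mul_pow, mul_pow, sq_abs]
      _ ≤ b j ^ 2 * ((u / exp 1) ^ 2 + (|θ j| * log (M / u)) ^ 2) := by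
          gcongr
          exact sq_mul_log_div_le (abs_nonneg _) (hθ j) hu
      _ = b j ^ 2 * (u / exp 1) ^ 2 + (θ * b) j ^ 2 * log (M / u) ^ 2 := by
          rw [Pi.mul_apply, mul_pow, mul_pow, sq_abs]; ring
  rw [l2_le_iff (mul_nonneg hM (l2_nonneg b))]
  calc ∑ j, (θ * KPF b - KPF (θ * b)) j ^ 2
      ≤ ∑ j, (b j ^ 2 * (u / exp 1) ^ 2 + (θ * b) j ^ 2 * log (M / u) ^ 2) := by
        simp only [KPF_commutator_apply]
        exact Finset.sum_le_sum fun j _ => hcoord j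
    _ = l2 b ^ 2 * ((u / exp 1) ^ 2 + (u * log (M / u)) ^ 2) := by
        rw [Finset.sum_add_distrib, ← Finset.sum_mul, ← Finset.sum_mul, ← l2_sq, ← l2_sq, hT]
        ring
    _ ≤ l2 b ^ 2 * M ^ 2 := by gcongr; exact sq_div_exp_one_add_sq_mul_log_le hu huM
    _ = (M * l2 b) ^ 2 := by ring

theorem znorm_mul_le {n : ℕ} (θ a b : Fin n → ℝ) {M : ℝ} (hM : 0 ≤ M) (hθ : ∀ j, |θ j| ≤ M) :
    znorm (θ * a, θ * b) ≤ 2 * M * znorm (a, b) := by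
  have hsplit : θ * a - KPF (θ * b) = θ * (a - KPF b) + (θ * KPF b - KPF (θ * b)) := by ring
  have hA := mul_nonneg hM (l2_nonneg (a - KPF b))
  calc znorm (θ * a, θ * b)
      = l2 (θ * b) + l2 (θ * (a - KPF b) + (θ * KPF b - KPF (θ * b))) := by rw [znorm, hsplit]
    _ ≤ M * l2 b + (M * l2 (a - KPF b) + M * l2 b) := by
        gcongr
        · exact l2_mul_le θ b hM hθ
        · exact (l2_add_le _ _).trans
            (add_le_add (l2_mul_le θ _ hM hθ) (l2_commutator_KPF_le θ b hM hθ))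
    _ ≤ 2 * M * znorm (a, b) := by rw [znorm]; linarith

/-- Coordinatewise multiplication by `θ` on both components is bounded on `Z_2^n`
by `C · max_j |θ_j|`, uniformly in `n`. -/
theorem znorm_coordinatewise_mult :
    ∃ C : ℝ, 0 < C ∧ ∀ n : ℕ, 1 ≤ n → ∀ θ a b : Fin n → ℝ,
      znorm (θ * a, θ * b) ≤ C * (⨆ j, |θ j|) * znorm (a, b) :=
  ⟨2, two_pos, fun _ _ θ a b => znorm_mul_le θ a b (Real.iSup_nonneg fun j => abs_nonneg (θ j))
    fun j => le_ciSup (f := fun j => |θ j|) (Set.finite_range _).bddAbove j⟩
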